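/- Let α = 1, n ≥ 1, and let I_n = {0,1,…,n} be the path graph on n+1 vertices with weights r : I_n → {0,1}. Suppose that in the cumulatively merged partition 𝒞(I_n, r, 1) the vertices 0 and n belong to the same cluster. Then I_n, viewed as a subset of the path graph ℤ, is a stable set for the CMP constructed with the reversed weights r̃(x) = 1 − r(x) for x ∈ I_n. -/

import Mathlib

open scoped ENNReal NNReal
open MeasureTheory

namespace CMPPaper

variable {V : Type*}

/-- Graph distance between two subsets of vertices, valued in `ℝ≥0∞`
(`⊤` when one of the sets is empty). -/
noncomputable def setDist (G : SimpleGraph V) (A B : Set V) : ℝ≥0∞ :=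
  ⨅ (x : A) (y : B), (G.dist x.1 y.1 : ℝ≥0∞)

/-- Total weight `r(A) = Σ_{x ∈ A} r(x) ∈ [0,∞]` of a set of vertices. -/
noncomputable def wt (r : V → ℝ≥0) (A : Set V) : ℝ≥0∞ :=
  ∑' x : A, (r x.1 : ℝ≥0∞)

/-- A partition (encoded as a setoid) of the vertex set is `(r,α)`-admissible if any two
distinct clusters `C ≠ C'` satisfy `d(C,C') > min(r(C), r(C'))^α`. -/
def Admissible (G : SimpleGraph V) (r : V → ℝ≥0) (α : ℝ) (s : Setoid V) : Prop :=
  ∀ C ∈ s.classes, ∀ C' ∈ s.classes, C ≠ C' →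
    (min (wt r C) (wt r C')) ^ α < setDist G C C'

/-- The cumulatively merged partition: the finest `(r,α)`-admissible partition, i.e. the
intersection (infimum as setoids) of all `(r,α)`-admissible partitions. -/
noncomputable def CMP (G : SimpleGraph V) (r : V → ℝ≥0) (α : ℝ) : Setoid V :=
  sInf {s : Setoid V | Admissible G r α s}

/-- The cluster of the CMP containing `x`. -/
def cluster (G : SimpleGraph V) (r : V → ℝ≥0) (α : ℝ) (x : V) : Set V :=
  {y | (CMP G r α) x y}

/-- The ball `B(A, l) = {z : d(z,A) ≤ l}` around a set of vertices. -/
def ballSet (G : SimpleGraph V) (A : Set V) (l : ℝ≥0∞) : Set V :=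
  {z | ∃ a ∈ A, (G.dist z a : ℝ≥0∞) ≤ l}

/-- A subset `H` of the vertices is stable if every cluster `C` of the CMP of the induced
subgraph on `H` (with the restricted weights) satisfies `B(C, r(C)^α) ⊆ H`. -/
def IsStable (G : SimpleGraph V) (r : V → ℝ≥0) (α : ℝ) (H : Set V) : Prop :=
  ∀ C ∈ (CMP (G.induce H) (fun x : H => r x) α).classes,
    ballSet G (Subtype.val '' C) ((wt (fun x : H => r x) C) ^ α) ⊆ H

/-- The stabiliser of `W`: the smallest stable set containing `W`, i.e. the intersection of
all stable sets containing `W`. -/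
def stabiliser (G : SimpleGraph V) (r : V → ℝ≥0) (α : ℝ) (W : Set V) : Set V :=
  ⋂₀ {H : Set V | IsStable G r α H ∧ W ⊆ H}

open Classical in
/-- The merging operator `M_{x,y}`: if the clusters of `x` and `y` are distinct and
`d(x,y) ≤ min(r(𝒞_x), r(𝒞_y))^α`, merge them (take the smallest coarsening of `s`
relating `x` and `y`); otherwise leave the partition unchanged. -/
noncomputable def mergeOp (G : SimpleGraph V) (r : V → ℝ≥0) (α : ℝ) (x y : V)
    (s : Setoid V) : Setoid V :=
  if ¬ s x y ∧ (G.dist x y : ℝ≥0∞) ≤ (min (wt r {u | s x u}) (wt r {u | s y u})) ^ α then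
    sInf {t : Setoid V | s ≤ t ∧ t x y}
  else s

/-- The relation `C ↦ C'` (`C'` descends from `C`) on clusters of the CMP. -/
def Descends (G : SimpleGraph V) (r : V → ℝ≥0) (α : ℝ) (C C' : Set V) : Prop :=
  C ∈ (CMP G r α).classes ∧ C' ∈ (CMP G r α).classes ∧ C ≠ C' ∧
    setDist G C C' ≤ (wt r C) ^ α

/-- Integer part of an extended nonnegative real, valued in `ℕ∞`. -/
noncomputable def efloor (x : ℝ≥0∞) : ℕ∞ :=
  if x = ⊤ then ⊤ else (⌊x.toReal⌋₊ : ℕ∞)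

/-- The bound `max(w log₂ w / 2, 0)` (for `α = 1`), resp. `w^α/(2^α-2)` (for `α ≠ 1`),
on the diameter of a cluster of total weight `w`. -/
noncomputable def diamBound (α : ℝ) (w : ℝ≥0∞) : ℝ≥0∞ :=
  if α = 1 then
    (if w = ⊤ then ⊤ else ENNReal.ofReal (max (w.toReal * Real.logb 2 w.toReal / 2) 0))
  else w ^ α / ((2 : ℝ≥0∞) ^ α - 2)

/-- The relation `C →η C'` on clusters of the CMP:  `d(C,C') ≤ η·r(C)^α`. -/
def EtaDesc (G : SimpleGraph V) (r : V → ℝ≥0) (α η : ℝ) (C C' : Set V) : Prop :=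
  C ∈ (CMP G r α).classes ∧ C' ∈ (CMP G r α).classes ∧ C ≠ C' ∧
    setDist G C C' ≤ ENNReal.ofReal η * (wt r C) ^ α

/-- The `η`-stabiliser of a vertex `x`: the union of `𝒞_x` together with all clusters
reachable from `𝒞_x` by a finite oriented path for the relation `→η`. -/
def etaStab (G : SimpleGraph V) (r : V → ℝ≥0) (α η : ℝ) (x : V) : Set V :=
  ⋃₀ {C' | Relation.ReflTransGen (EtaDesc G r α η) (cluster G r α x) C'}

/-- The path graph on `ℕ`: `m` and `m+1` are adjacent. -/
def pathGraphN : SimpleGraph ℕ := SimpleGraph.fromRel (fun m n => n = m + 1)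

/-- The two-sided path graph on `ℤ`: `k` and `k+1` are adjacent. -/
def pathGraphZ : SimpleGraph ℤ := SimpleGraph.fromRel (fun a b => b = a + 1)

/-- The hypercubic lattice `ℤ^d`: `x` and `y` are adjacent iff `‖x-y‖₁ = 1`. -/
def latticeGraph (d : ℕ) : SimpleGraph (Fin d → ℤ) :=
  SimpleGraph.fromRel (fun x y => (∑ i, |x i - y i|) = 1)

/-- The CMP of the weighted graph `(G, r)` with expansion exponent `α` has an
infinite cluster. -/
def HasInfiniteCluster (G : SimpleGraph V) (r : V → ℝ≥0) (α : ℝ) : Prop :=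
  ∃ C ∈ (CMP G r α).classes, C.Infinite

/-- `w` is an i.i.d. family of Bernoulli(`p`) weights indexed by `V`, under the
probability measure `μ`. -/
def IsBernoulliField {Ω : Type*} [MeasurableSpace Ω] (μ : Measure Ω)
    (p : ℝ) (w : Ω → V → ℝ≥0) : Prop :=
  (∀ x : V, Measurable fun ω => w ω x) ∧
  (∀ ω x, w ω x = 0 ∨ w ω x = 1) ∧
  (∀ x : V, μ {ω | w ω x = 1} = ENNReal.ofReal p) ∧
  ProbabilityTheory.iIndepFun (fun x ω => w ω x) μ

/-- `w` is an i.i.d. family of weights indexed by `V`, each with law `ν`, under the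
probability measure `μ`. -/
def IsIIDField {Ω : Type*} [MeasurableSpace Ω] (μ : Measure Ω)
    (ν : Measure ℝ≥0) (w : Ω → V → ℝ≥0) : Prop :=
  (∀ x : V, Measurable fun ω => w ω x) ∧
  (∀ x : V, μ.map (fun ω => w ω x) = ν) ∧
  ProbabilityTheory.iIndepFun (fun x ω => w ω x) μ

/-!
Suppose a cluster `C` of the CMP of `[0,n]` for `r̃ = 1 - r` has its ball leaving `[0,n]`.
A CMP cluster cannot be cut into two parts farther apart than the smaller weight, since cutting
it would give a finer admissible partition. Hence `C` has no vertex of `r̃`-weight `0` (a single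
such vertex has radius `0`), so `r = 0` on `C`, `r̃(C) = |C|`, `C` reaches within `|C|` of an end
of the path, and every part `S ⊆ C` lies within `|S|` of `C \ S`. Cutting `[0,n]` at the points of
`C` then gives an `(r,1)`-admissible partition: two gaps separated by the points `K ⊆ C` are at
distance `> |K|`, while one of them has fewer than `|K|` points. This partition separates `0`
from `n`.
-/

section Admissibility

variable {G : SimpleGraph V} {r : V → ℝ≥0} {α : ℝ}

lemma setDist_le_dist {A B : Set V} {x y : V} (hx : x ∈ A) (hy : y ∈ B) :
    setDist G A B ≤ G.dist x y :=
  iInf_le_of_le ⟨x, hx⟩ (iInf_le_of_le ⟨y, hy⟩ le_rfl)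

lemma le_setDist {A B : Set V} {m : ℕ} (h : ∀ x ∈ A, ∀ y ∈ B, m ≤ G.dist x y) :
    (m : ℝ≥0∞) ≤ setDist G A B :=
  le_iInf fun x => le_iInf fun y => by exact_mod_cast h x.1 x.2 y.1 y.2

lemma setDist_comm (A B : Set V) : setDist G A B = setDist G B A := by
  rw [setDist, setDist, iInf_comm]
  simp only [SimpleGraph.dist_comm]

lemma setDist_anti {A B A' B' : Set V} (hA : A' ⊆ A) (hB : B' ⊆ B) :
    setDist G A B ≤ setDist G A' B' :=
  le_iInf fun x => le_iInf fun y => setDist_le_dist (hA x.2) (hB y.2)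

lemma wt_mono {A B : Set V} (h : A ⊆ B) : wt r A ≤ wt r B :=
  ENNReal.tsum_mono_subtype (fun v => (r v : ℝ≥0∞)) h

lemma wt_singleton (x : V) : wt r {x} = r x :=
  tsum_singleton x fun v => (r v : ℝ≥0∞)

lemma wt_eq_zero {A : Set V} (h : ∀ x ∈ A, r x = 0) : wt r A = 0 :=
  ENNReal.tsum_eq_zero.2 fun x => by simp [h x.1 x.2]

lemma wt_le_ncard {A : Set V} (hA : A.Finite) (h : ∀ x ∈ A, r x ≤ 1) :
    wt r A ≤ A.ncard := by
  calc wt r A ≤ ∑' _ : A, (1 : ℝ≥0∞) :=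
        ENNReal.tsum_le_tsum fun x => by exact_mod_cast h x.1 x.2
    _ = A.ncard := by rw [ENNReal.tsum_set_one, ← hA.cast_ncard_eq]; rfl

lemma wt_eq_ncard {A : Set V} (hA : A.Finite) (h : ∀ x ∈ A, r x = 1) : wt r A = A.ncard := by
  calc wt r A = ∑' _ : A, (1 : ℝ≥0∞) := tsum_congr fun x => by simp [h x.1 x.2]
    _ = A.ncard := by rw [ENNReal.tsum_set_one, ← hA.cast_ncard_eq]; rfl

lemma admissible_iff {s : Setoid V} :
    Admissible G r α s ↔ ∀ x y, ¬ s x y →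
      min (wt r {z | s z x}) (wt r {z | s z y}) ^ α < setDist G {z | s z x} {z | s z y} := by
  constructor
  · intro hs x y hxy
    refine hs _ (s.mem_classes x) _ (s.mem_classes y) fun he => hxy ?_
    have hy : y ∈ {z | s z y} := s.refl' y
    rw [← he] at hy
    exact s.symm' hy
  · rintro h _ ⟨x, rfl⟩ _ ⟨y, rfl⟩ hne
    exact h x y fun hxy =>
      hne (Set.ext fun z => ⟨fun hz => s.trans' hz hxy, fun hz => s.trans' hz (s.symm' hxy)⟩)

lemma CMP_rel_iff {x y : V} : CMP G r α x y ↔ ∀ s, Admissible G r α s → s x y := Iff.rfl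

lemma CMP_le {s : Setoid V} (hs : Admissible G r α s) : CMP G r α ≤ s := sInf_le hs

lemma min_wt_rpow_lt_setDist_of_le (hα : 0 ≤ α) {s t : Setoid V} (hs : Admissible G r α s)
    (hts : t ≤ s) {x y : V} (hxy : ¬ s x y) :
    min (wt r {z | t z x}) (wt r {z | t z y}) ^ α < setDist G {z | t z x} {z | t z y} := by
  have hx : {z | t z x} ⊆ {z | s z x} := fun z hz => hts hz
  have hy : {z | t z y} ⊆ {z | s z y} := fun z hz => hts hz
  calc min (wt r {z | t z x}) (wt r {z | t z y}) ^ α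
      ≤ min (wt r {z | s z x}) (wt r {z | s z y}) ^ α :=
        ENNReal.rpow_le_rpow (min_le_min (wt_mono hx) (wt_mono hy)) hα
    _ < setDist G {z | s z x} {z | s z y} := admissible_iff.1 hs x y hxy
    _ ≤ setDist G {z | t z x} {z | t z y} := setDist_anti hx hy

lemma admissible_CMP (hα : 0 ≤ α) : Admissible G r α (CMP G r α) := by
  refine admissible_iff.2 fun x y hxy => ?_
  obtain ⟨s, hs, hsxy⟩ : ∃ s, Admissible G r α s ∧ ¬ s x y := by
    simpa [CMP_rel_iff] using hxy
  exact min_wt_rpow_lt_setDist_of_le hα hs (CMP_le hs) hsxy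

lemma min_wt_rpow_lt_setDist_of_wt_eq_zero (hG : G.Preconnected) (hα : 0 < α) {s : Setoid V}
    {x y : V} (hxy : ¬ s x y) (h0 : wt r {z | s z x} = 0) :
    min (wt r {z | s z x}) (wt r {z | s z y}) ^ α < setDist G {z | s z x} {z | s z y} := by
  rw [h0, min_eq_left zero_le, ENNReal.zero_rpow_of_pos hα]
  refine lt_of_lt_of_le (by norm_num) (le_setDist (m := 1) fun u hu v hv => ?_)
  exact (hG u v).pos_dist_of_ne fun huv => hxy (s.trans' (s.symm' hu) (huv ▸ hv))

/-- Otherwise cutting the cluster into `S` and `C \ S` would give a finer admissible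
partition. -/
lemma setDist_diff_le_of_mem_classes (hα : 0 ≤ α) {C S : Set V}
    (hC : C ∈ (CMP G r α).classes) (hS : S ⊆ C) (hne : S.Nonempty) (hne' : (C \ S).Nonempty) :
    setDist G S (C \ S) ≤ min (wt r S) (wt r (C \ S)) ^ α := by
  by_contra! hlt
  obtain ⟨c, rfl⟩ := hC
  have ht_iff : ∀ x y, (CMP G r α ⊓ Setoid.ker (· ∈ S)) x y ↔
      CMP G r α x y ∧ (x ∈ S ↔ y ∈ S) := fun x y => by
    rw [Setoid.inf_iff_and, Setoid.ker_def, eq_iff_iff]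
  set t := CMP G r α ⊓ Setoid.ker (· ∈ S)
  have ht : Admissible G r α t := by
    refine admissible_iff.2 fun x y hxy => ?_
    by_cases hcmp : CMP G r α x y
    swap
    · exact min_wt_rpow_lt_setDist_of_le hα (admissible_CMP hα) inf_le_left hcmp
    wlog hx : x ∈ S generalizing x y
    · have hy : y ∈ S := by by_contra hy; exact hxy ((ht_iff x y).2 ⟨hcmp, by tauto⟩)
      rw [min_comm, setDist_comm]
      exact this y x (fun h => hxy (t.symm' h)) ((CMP G r α).symm' hcmp) hy
    have hy : y ∉ S := fun hy => hxy ((ht_iff x y).2 ⟨hcmp, by tauto⟩)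
    have hxc : CMP G r α x c := hS hx
    have hyc : CMP G r α y c := (CMP G r α).trans' ((CMP G r α).symm' hcmp) hxc
    have hSx : {z | t z x} = S := Set.ext fun z => by
      simp only [Set.mem_ofPred_eq, ht_iff, iff_true_intro hx, iff_true]
      exact ⟨And.right,
        fun hz => ⟨(CMP G r α).trans' (hS hz) ((CMP G r α).symm' hxc), hz⟩⟩
    have hSy : {z | t z y} = {z | CMP G r α z c} \ S := Set.ext fun z => by
      simp only [Set.mem_ofPred_eq, Set.mem_sdiff, ht_iff, iff_false_intro hy, iff_false]
      exact ⟨fun h => ⟨(CMP G r α).trans' h.1 hyc, h.2⟩,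
        fun h => ⟨(CMP G r α).trans' h.1 ((CMP G r α).symm' hyc), h.2⟩⟩
    rw [hSx, hSy]
    exact hlt
  obtain ⟨u, hu⟩ := hne
  obtain ⟨v, hv, hvS⟩ := hne'
  have huv : t u v := CMP_le ht ((CMP G r α).trans' (hS hu) ((CMP G r α).symm' hv))
  exact hvS (((ht_iff u v).1 huv).2.1 hu)

lemma eq_singleton_of_mem_classes_CMP (hG : G.Preconnected) (hα : 0 < α) {C : Set V}
    (hC : C ∈ (CMP G r α).classes) {u : V} (hu : u ∈ C) (hr : r u = 0) : C = {u} := by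
  by_contra hCu
  have hne : (C \ {u}).Nonempty :=
    Set.sdiff_nonempty.2 fun h => hCu (h.antisymm (Set.singleton_subset_iff.2 hu))
  have hle := setDist_diff_le_of_mem_classes hα.le hC (Set.singleton_subset_iff.2 hu)
    (Set.singleton_nonempty u) hne
  rw [wt_singleton, hr, ENNReal.coe_zero, min_eq_left zero_le,
    ENNReal.zero_rpow_of_pos hα] at hle
  have hge : ((1 : ℕ) : ℝ≥0∞) ≤ setDist G {u} (C \ {u}) :=
    le_setDist fun x hx y hy => (hG x y).pos_dist_of_ne fun hxy => hy.2 (hxy ▸ hx)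
  exact absurd (hge.trans hle) (by norm_num)

end Admissibility

section PathGraph

open SimpleGraph

lemma pathGraphZ_adj {a b : ℤ} : pathGraphZ.Adj a b ↔ b = a + 1 ∨ a = b + 1 := by
  simp only [pathGraphZ, fromRel_adj]
  omega

lemma natAbs_sub_le_length {a b : ℤ} (p : pathGraphZ.Walk a b) : (a - b).natAbs ≤ p.length := by
  induction p with
  | nil => simp
  | cons h p ih =>
    rw [Walk.length_cons]
    rw [pathGraphZ_adj] at h
    omega

variable {p q : ℤ}

lemma preconnected_induce_Icc : (pathGraphZ.induce (Set.Icc p q)).Preconnected := by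
  intro x y
  wlog hxy : x.1 ≤ y.1 generalizing x y
  · exact (this y x (by omega)).symm
  obtain ⟨y, hy⟩ := y
  replace hxy : x.1 ≤ y := hxy
  revert hy
  induction y, hxy using Int.leInduction with
  | base => exact fun _ => Reachable.refl x
  | succ k hk ih =>
    intro hy
    have hk' : k ∈ Set.Icc p q := ⟨x.2.1.trans hk, by linarith [hy.2]⟩
    refine (ih hk').trans (Adj.reachable ?_)
    simp [pathGraphZ_adj]

lemma pathGraphZ_preconnected : pathGraphZ.Preconnected := fun a b =>
  (preconnected_induce_Icc (p := min a b) (q := max a b) ⟨a, min_le_left a b, le_max_left a b⟩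
    ⟨b, min_le_right a b, le_max_right a b⟩).map (Embedding.induce _).toHom

lemma natAbs_sub_le_dist (a b : ℤ) : (a - b).natAbs ≤ pathGraphZ.dist a b := by
  obtain ⟨w, hw⟩ := (pathGraphZ_preconnected a b).exists_walk_length_eq_dist
  exact hw ▸ natAbs_sub_le_length w

lemma natAbs_sub_le_dist_induce_Icc (x y : Set.Icc p q) :
    (x.1 - y.1).natAbs ≤ (pathGraphZ.induce (Set.Icc p q)).dist x y := by
  obtain ⟨w, hw⟩ := (preconnected_induce_Icc x y).exists_walk_length_eq_dist
  rw [← hw, ← Walk.length_map (Embedding.induce _).toHom]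
  exact natAbs_sub_le_length _

lemma ncard_le_of_forall_mem_Ioo {s : Set ℤ} {S : Set s} {a b : ℤ}
    (h : ∀ u ∈ S, a < u.1 ∧ u.1 < b) : S.ncard ≤ (b - a - 1).toNat := by
  rw [← Set.ncard_image_of_injective S Subtype.val_injective, ← Int.card_Ioo,
    ← Set.ncard_coe_finset, Finset.coe_Ioo]
  exact Set.ncard_le_ncard (by rintro _ ⟨u, hu, rfl⟩; exact h u hu) (Set.finite_Ioo a b)

lemma lt_or_lt_of_dist_le {z a : ℤ} (hz : z ∉ Set.Icc p q) (ha : a ∈ Set.Icc p q) {m : ℕ}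
    (h : pathGraphZ.dist z a ≤ m) : a - p < m ∨ q - a < m := by
  have := natAbs_sub_le_dist z a
  simp only [Set.mem_Icc] at hz ha
  omega

def IsCohesive {s : Set ℤ} (D : Set s) : Prop :=
  ∀ S ⊆ D, S.Nonempty → (D \ S).Nonempty →
    ∃ x ∈ S, ∃ y ∈ D \ S, (x.1 - y.1).natAbs ≤ S.ncard

lemma isCohesive_of_mem_classes_CMP {w : Set.Icc p q → ℝ≥0} {C : Set (Set.Icc p q)}
    (hC : C ∈ (CMP (pathGraphZ.induce (Set.Icc p q)) w 1).classes) (hw : ∀ x ∈ C, w x = 1) :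
    IsCohesive C := by
  intro S hS hne hne'
  by_contra! hfar
  have hle := setDist_diff_le_of_mem_classes zero_le_one hC hS hne hne'
  rw [ENNReal.rpow_one] at hle
  have hge : ((S.ncard + 1 : ℕ) : ℝ≥0∞) ≤
      setDist (pathGraphZ.induce (Set.Icc p q)) S (C \ S) :=
    le_setDist fun x hx y hy => (hfar x hx y hy).trans_le (natAbs_sub_le_dist_induce_Icc x y)
  have hwS : min (wt w S) (wt w (C \ S)) ≤ S.ncard :=
    (min_le_left _ _).trans (wt_eq_ncard S.toFinite fun x hx => hw x (hS hx)).le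
  have := hge.trans (hle.trans hwS)
  norm_cast at this
  omega

end PathGraph

section GapPartition

variable {β : Type*} [LinearOrder β] {D : Set β}

/-- The classes are the singletons of `D` and the maximal intervals avoiding `D`. -/
def gapSetoid (D : Set β) : Setoid β := Setoid.ker fun x (d : D) => compare x d

lemma gapSetoid_iff {x y : β} : gapSetoid D x y ↔ ∀ d ∈ D, compare x d = compare y d := by
  rw [gapSetoid, Setoid.ker_def, funext_iff, Subtype.forall]

lemma gapSetoid_lt_iff {x y d : β} (h : gapSetoid D x y) (hd : d ∈ D) : x < d ↔ y < d := by
  rw [← compare_lt_iff_lt, ← compare_lt_iff_lt, gapSetoid_iff.1 h d hd]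

lemma gapSetoid_gt_iff {x y d : β} (h : gapSetoid D x y) (hd : d ∈ D) : d < x ↔ d < y := by
  rw [← compare_gt_iff_gt, ← compare_gt_iff_gt, gapSetoid_iff.1 h d hd]

lemma eq_of_gapSetoid_of_le_of_le {x y d : β} (h : gapSetoid D x y) (hd : d ∈ D) (hxd : x ≤ d)
    (hdy : d ≤ y) : x = y := by
  rcases hxd.lt_or_eq with hxd | rfl
  · exact absurd ((gapSetoid_lt_iff h hd).1 hxd) hdy.not_gt
  · rw [eq_comm, ← compare_eq_iff_eq, ← gapSetoid_iff.1 h x hd]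
    exact compare_eq_iff_eq.2 rfl

lemma eq_of_gapSetoid_of_mem {x y : β} (h : gapSetoid D x y) (hy : y ∈ D) : x = y := by
  rcases le_total x y with hxy | hyx
  · exact eq_of_gapSetoid_of_le_of_le h hy hxy le_rfl
  · exact (eq_of_gapSetoid_of_le_of_le ((gapSetoid D).symm' h) hy le_rfl hyx).symm

end GapPartition

section PathGapPartition

variable {p q : ℤ} {D : Set (Set.Icc p q)}

lemma ncard_lt_natAbs_of_gapSetoid {x y d u v : Set.Icc p q} (hd : d ∈ D) (hxd : x < d)
    (hdy : d < y) (hu : gapSetoid D u x) (hv : gapSetoid D v y) :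
    {e ∈ D | x < e ∧ e < y}.ncard < (u.1 - v.1).natAbs := by
  have hK : ∀ e ∈ {e ∈ D | x < e ∧ e < y}, u.1 < e.1 ∧ e.1 < v.1 :=
    fun e ⟨he, hxe, hey⟩ => ⟨(gapSetoid_lt_iff hu he).2 hxe, (gapSetoid_gt_iff hv he).2 hey⟩
  have hud : u.1 < d.1 := (gapSetoid_lt_iff hu hd).2 hxd
  have hdv : d.1 < v.1 := (gapSetoid_gt_iff hv hd).2 hdy
  have := ncard_le_of_forall_mem_Ioo hK
  omega

/-- Either `D = K`, and the point of `D` near an end of the path confines the gap on that side;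
or cohesion puts a point of `D \ K` within `|K|` of `K`, beyond one of the two gaps. -/
lemma ncard_gapSetoid_lt (hD : IsCohesive D)
    (hwide : ∃ a ∈ D, a.1 - p < D.ncard ∨ q - a.1 < D.ncard)
    {x y d : Set.Icc p q} (hx : x ∉ D) (hy : y ∉ D) (hd : d ∈ D) (hxd : x < d) (hdy : d < y) :
    {u | gapSetoid D u x}.ncard < {e ∈ D | x < e ∧ e < y}.ncard ∨
      {v | gapSetoid D v y}.ncard < {e ∈ D | x < e ∧ e < y}.ncard := by
  set K := {e ∈ D | x < e ∧ e < y}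
  by_cases hDK : D ⊆ K
  · have hKD : K = D := (Set.sep_subset _ _).antisymm hDK
    obtain ⟨a, haD, ha⟩ := hwide
    obtain ⟨-, hxa, hay⟩ := hDK haD
    have ha' : p ≤ a.1 ∧ a.1 ≤ q := a.2
    rw [hKD]
    rcases ha with ha | ha
    · have := ncard_le_of_forall_mem_Ioo (a := p - 1) (b := a.1) (S := {u | gapSetoid D u x})
        fun u hu => ⟨by linarith [u.2.1], (gapSetoid_lt_iff hu haD).2 hxa⟩
      omega
    · have := ncard_le_of_forall_mem_Ioo (a := a.1) (b := q + 1) (S := {v | gapSetoid D v y})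
        fun v hv => ⟨(gapSetoid_gt_iff hv haD).2 hay, by linarith [v.2.2]⟩
      omega
  · obtain ⟨x', ⟨hx'D, hxx', hx'y⟩, y', ⟨hy'D, hy'K⟩, hclose⟩ :=
      hD K (Set.sep_subset _ _) ⟨d, hd, hxd, hdy⟩ (Set.sdiff_nonempty.2 hDK)
    have hy'x : y' ≠ x := fun h => hx (h ▸ hy'D)
    have hy'y : y' ≠ y := fun h => hy (h ▸ hy'D)
    rcases lt_or_gt_of_ne hy'x with hy'x | hxy'
    · have hy'x' : y'.1 < x'.1 := hy'x.trans hxx'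
      have := ncard_le_of_forall_mem_Ioo (a := y'.1) (b := x'.1) (S := {u | gapSetoid D u x})
        fun u hu => ⟨(gapSetoid_gt_iff hu hy'D).2 hy'x, (gapSetoid_lt_iff hu hx'D).2 hxx'⟩
      omega
    · have hyy' : y < y' := lt_of_le_of_ne (not_lt.1 fun h => hy'K ⟨hy'D, hxy', h⟩) hy'y.symm
      have hx'y' : x'.1 < y'.1 := hx'y.trans hyy'
      have := ncard_le_of_forall_mem_Ioo (a := x'.1) (b := y'.1) (S := {v | gapSetoid D v y})
        fun v hv => ⟨(gapSetoid_gt_iff hv hx'D).2 hx'y, (gapSetoid_lt_iff hv hy'D).2 hyy'⟩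
      omega

lemma min_wt_lt_setDist_of_gapSetoid {w : Set.Icc p q → ℝ≥0} (hw : ∀ x, w x ≤ 1)
    (hD : IsCohesive D) (hwide : ∃ a ∈ D, a.1 - p < D.ncard ∨ q - a.1 < D.ncard)
    {x y d : Set.Icc p q} (hx : x ∉ D) (hy : y ∉ D) (hd : d ∈ D) (hxd : x < d) (hdy : d < y) :
    min (wt w {u | gapSetoid D u x}) (wt w {v | gapSetoid D v y}) ^ (1 : ℝ) <
      setDist (pathGraphZ.induce (Set.Icc p q)) {u | gapSetoid D u x} {v | gapSetoid D v y} := by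
  set K := {e ∈ D | x < e ∧ e < y}
  have hdist : (K.ncard : ℝ≥0∞) ≤
      setDist (pathGraphZ.induce (Set.Icc p q)) {u | gapSetoid D u x} {v | gapSetoid D v y} :=
    le_setDist fun u hu v hv =>
      (ncard_lt_natAbs_of_gapSetoid hd hxd hdy hu hv).le.trans (natAbs_sub_le_dist_induce_Icc u v)
  have hwt (S : Set (Set.Icc p q)) : wt w S ≤ S.ncard := wt_le_ncard S.toFinite fun x _ => hw x
  rw [ENNReal.rpow_one]
  refine lt_of_lt_of_le ?_ hdist
  rcases ncard_gapSetoid_lt hD hwide hx hy hd hxd hdy with h | h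
  · exact (min_le_left _ _).trans_lt ((hwt _).trans_lt (by exact_mod_cast h))
  · exact (min_le_right _ _).trans_lt ((hwt _).trans_lt (by exact_mod_cast h))

theorem admissible_gapSetoid {w : Set.Icc p q → ℝ≥0} (hw : ∀ x, w x ≤ 1)
    (hw0 : ∀ x ∈ D, w x = 0) (hD : IsCohesive D)
    (hwide : ∃ a ∈ D, a.1 - p < D.ncard ∨ q - a.1 < D.ncard) :
    Admissible (pathGraphZ.induce (Set.Icc p q)) w 1 (gapSetoid D) := by
  refine admissible_iff.2 fun x y hxy => ?_
  have hzero {x : Set.Icc p q} (hx : x ∈ D) : wt w {u | gapSetoid D u x} = 0 :=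
    wt_eq_zero fun u hu => hw0 u (eq_of_gapSetoid_of_mem hu hx ▸ hx)
  by_cases hx : x ∈ D
  · exact min_wt_rpow_lt_setDist_of_wt_eq_zero preconnected_induce_Icc one_pos hxy (hzero hx)
  by_cases hy : y ∈ D
  · rw [min_comm, setDist_comm]
    exact min_wt_rpow_lt_setDist_of_wt_eq_zero preconnected_induce_Icc one_pos
      (fun h => hxy ((gapSetoid D).symm' h)) (hzero hy)
  obtain ⟨d, hd, hne⟩ : ∃ d ∈ D, compare x d ≠ compare y d := by
    simpa only [gapSetoid_iff, not_forall, exists_prop] using hxy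
  have hxd : x ≠ d := fun h => hx (h ▸ hd)
  have hyd : y ≠ d := fun h => hy (h ▸ hd)
  rcases lt_or_gt_of_ne hxd with hxd | hdx <;> rcases lt_or_gt_of_ne hyd with hyd | hdy
  · simp [compare_lt_iff_lt.2 hxd, compare_lt_iff_lt.2 hyd] at hne
  · exact min_wt_lt_setDist_of_gapSetoid hw hD hwide hx hy hd hxd hdy
  · rw [min_comm, setDist_comm]
    exact min_wt_lt_setDist_of_gapSetoid hw hD hwide hy hx hd hyd hdx
  · simp [compare_gt_iff_gt.2 hdx, compare_gt_iff_gt.2 hdy] at hne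

end PathGapPartition

/-- Duality on `ℤ` for `α = 1` and `{0,1}`-valued weights: if in the CMP of the path
`I_n = {0,…,n}` the endpoints `0` and `n` lie in the same cluster, then `I_n`, viewed as a
subset of `ℤ`, is stable for the CMP constructed from the reversed weights `r̃ = 1 − r`. -/
theorem duality_on_Z
    (n : ℤ) (hn : 1 ≤ n) (r : ℤ → ℝ≥0)
    (hr : ∀ x ∈ Set.Icc (0 : ℤ) n, r x = 0 ∨ r x = 1)
    (h0 : (0 : ℤ) ∈ Set.Icc (0 : ℤ) n) (hnmem : n ∈ Set.Icc (0 : ℤ) n)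
    (hsame : (CMP (pathGraphZ.induce (Set.Icc (0 : ℤ) n))
        (fun x : ↥(Set.Icc (0 : ℤ) n) => r ↑x) 1) ⟨0, h0⟩ ⟨n, hnmem⟩) :
    IsStable pathGraphZ (fun x => 1 - r x) 1 (Set.Icc (0 : ℤ) n) := by
  rintro C hC z ⟨_, ⟨a, haC, rfl⟩, hza⟩
  by_contra hz
  rw [ENNReal.rpow_one] at hza
  have hC0 : ∀ u ∈ C, r u = 0 := by
    intro u hu
    refine (hr u u.2).resolve_right fun hu1 => hz ?_
    rw [eq_singleton_of_mem_classes_CMP preconnected_induce_Icc one_pos hC hu (by simp [hu1]),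
      wt_singleton] at hza
    simp only [hu1, tsub_self, ENNReal.coe_zero, nonpos_iff_eq_zero, Nat.cast_eq_zero,
      (pathGraphZ_preconnected z a).dist_eq_zero_iff] at hza
    exact hza ▸ a.2
  have hwt : wt (fun x : Set.Icc 0 n => 1 - r x) C = C.ncard :=
    wt_eq_ncard C.toFinite fun x hx => by simp [hC0 x hx]
  have hwide : a.1 - 0 < C.ncard ∨ n - a.1 < C.ncard :=
    lt_or_lt_of_dist_le hz a.2 (by exact_mod_cast hwt ▸ hza)
  have hcoh : IsCohesive C := isCohesive_of_mem_classes_CMP hC fun x hx => by simp [hC0 x hx]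
  have hr1 : ∀ x : Set.Icc 0 n, r x ≤ 1 := fun x =>
    (hr x x.2).elim (fun h => h ▸ zero_le_one) le_of_eq
  have h0n := CMP_le (admissible_gapSetoid hr1 hC0 hcoh ⟨a, haC, hwide⟩) hsame
  have h0n' : (0 : ℤ) = n :=
    congrArg Subtype.val (eq_of_gapSetoid_of_le_of_le h0n haC a.2.1 a.2.2)
  omega

end CMPPaper
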